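/- Assume c ≥ 0 and c - div b ≥ λ > 0. Let (u,q) ∈ H^1_0(Ω) × H(div,Ω) solve q = A∇u - b u and -div q + (c - div b)u = f. Then ‖f‖²_{(c-div b)^{-1}} = ‖u‖²_c + ‖∇u‖²_A + ‖q + b u‖²_{A^{-1}} + ‖div q‖²_{(c-div b)^{-1}}. -/

import Mathlib

open MeasureTheory Complex Filter Finset
open scoped ENNReal

noncomputable section

namespace RCD

variable {d : ℕ}

/-- The ambient Euclidean space `ℝ^d`. -/
abbrev E (d : ℕ) := EuclideanSpace ℝ (Fin d)

/-- Componentwise gradient of a scalar function. -/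
def grad (φ : E d → ℂ) (x : E d) (j : Fin d) : ℂ :=
  fderiv ℝ φ x (EuclideanSpace.single j 1)

/-- A smooth test function compactly supported inside `Ω`. -/
def IsTest (Ω : Set (E d)) (φ : E d → ℂ) : Prop :=
  ContDiff ℝ (⊤ : ℕ∞) φ ∧ HasCompactSupport φ ∧ tsupport φ ⊆ Ω

/-- Complex `L²` inner product (conjugate-linear in the first argument). -/
def ip (μ : Measure (E d)) (f g : E d → ℂ) : ℂ :=
  ∫ x, (starRingEnd ℂ) (f x) * g x ∂μ

/-- Complex `L²` inner product of vector fields. -/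
def ipV (μ : Measure (E d)) (f g : E d → Fin d → ℂ) : ℂ :=
  ∫ x, ∑ j, (starRingEnd ℂ) (f x j) * g x j ∂μ

/-- Squared `L²` norm with real weight `γ`. -/
def nsq (μ : Measure (E d)) (γ : E d → ℝ) (f : E d → ℂ) : ℝ :=
  ∫ x, γ x * ‖f x‖ ^ 2 ∂μ

/-- Squared `L²` norm of a vector field with real weight `γ`. -/
def nsqV (μ : Measure (E d)) (γ : E d → ℝ) (f : E d → Fin d → ℂ) : ℝ :=
  ∫ x, γ x * ∑ j, ‖f x j‖ ^ 2 ∂μ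

/-- Squared `L²` norm of a vector field weighted by a matrix field `M`. -/
def nsqM (μ : Measure (E d)) (M : E d → Matrix (Fin d) (Fin d) ℝ)
    (f : E d → Fin d → ℂ) : ℝ :=
  ∫ x, ∑ i, ∑ j, M x i j * ((starRingEnd ℂ) (f x i) * f x j).re ∂μ

/-- Product of a real matrix with a complex vector. -/
def mul (M : Matrix (Fin d) (Fin d) ℝ) (v : Fin d → ℂ) (i : Fin d) : ℂ :=
  ∑ j, (M i j : ℂ) * v j

/-- A vector field is componentwise `L²`. -/
def MemL2V (μ : Measure (E d)) (f : E d → Fin d → ℂ) : Prop :=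
  ∀ j, MemLp (fun x => f x j) 2 μ

/-- Membership `v ∈ H¹₀(Ω)` with gradient `gv`: `v` is an `H¹`-limit of smooth
functions compactly supported in `Ω`. -/
def MemH10 (Ω : Set (E d)) (μ : Measure (E d)) (v : E d → ℂ)
    (gv : E d → Fin d → ℂ) : Prop :=
  MemLp v 2 μ ∧ MemL2V μ gv ∧
  ∃ φ : ℕ → E d → ℂ, (∀ n, IsTest Ω (φ n)) ∧
    Tendsto (fun n => nsq μ (fun _ => 1) (fun x => φ n x - v x) +
      nsqV μ (fun _ => 1) (fun x j => grad (φ n) x j - gv x j)) atTop (nhds 0)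

/-- Membership `p ∈ H(div,Ω)` with divergence `dp` (distributional divergence). -/
def MemHdiv (Ω : Set (E d)) (μ : Measure (E d)) (p : E d → Fin d → ℂ)
    (dp : E d → ℂ) : Prop :=
  MemL2V μ p ∧ MemLp dp 2 μ ∧
  ∀ φ : E d → ℂ, IsTest Ω φ →
    ∫ x, ∑ j, grad φ x j * p x j ∂μ = - ∫ x, φ x * dp x ∂μ

/-- `db` is the distributional divergence of the real vector field `b` on `Ω`. -/
def IsDiv (Ω : Set (E d)) (μ : Measure (E d)) (b : E d → Fin d → ℝ)
    (db : E d → ℝ) : Prop :=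
  ∀ φ : E d → ℂ, IsTest Ω φ →
    ∫ x, ∑ j, grad φ x j * (b x j : ℂ) ∂μ = - ∫ x, φ x * (db x : ℂ) ∂μ

/-- The real vector field `b` is componentwise `L^∞`. -/
def MemLinfV (μ : Measure (E d)) (b : E d → Fin d → ℝ) : Prop :=
  ∀ j, MemLp (fun x => b x j) ⊤ μ

/-- The diffusion matrix `A` is self-adjoint, `L^∞`, with lower spectral bound `α > 0`. -/
def IsDiffusion (μ : Measure (E d)) (A : E d → Matrix (Fin d) (Fin d) ℝ)
    (α : ℝ) : Prop :=
  (∀ x, (A x).IsSymm) ∧ (∀ i j, MemLp (fun x => A x i j) ⊤ μ) ∧ 0 < α ∧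
  ∀ x (v : Fin d → ℂ),
    α * ∑ j, ‖v j‖ ^ 2 ≤ ∑ i, ∑ j, A x i j * ((starRingEnd ℂ) (v i) * v j).re

/-- The convective derivative `b·∇u`. -/
def bdot (b : E d → Fin d → ℝ) (gu : E d → Fin d → ℂ) (x : E d) : ℂ :=
  ∑ j, (b x j : ℂ) * gu x j

/-- The Friedrichs inequality on `Ω` with constant `CF`:
`‖w‖ ≤ CF ‖∇w‖` for all `w ∈ H¹₀(Ω)` (stated for squared norms). -/
def Friedrichs (Ω : Set (E d)) (μ : Measure (E d)) (CF : ℝ) : Prop :=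
  ∀ w gw, MemH10 Ω μ w gw →
    nsq μ (fun _ => 1) w ≤ CF ^ 2 * nsqV μ (fun _ => 1) gw

/-- `∑_j ‖b_j‖²_{L^∞}`, the squared `L^∞` norm of the vector field `b`. -/
def bInfSq (μ : Measure (E d)) (b : E d → Fin d → ℝ) : ℝ :=
  ∑ j, ((eLpNorm (fun x => b x j) ⊤ μ).toReal) ^ 2

end RCD

section Helpers

variable {α : Type*} [MeasurableSpace α] {μ : Measure α}

variable {α : Type*} [MeasurableSpace α] {μ : Measure α}

/-- product of two L² functions is integrable -/
lemma memL2.integrable_conj_mul {f g : α → ℂ} (hf : MemLp f 2 μ) (hg : MemLp g 2 μ) :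
    Integrable (fun x => (starRingEnd ℂ) (f x) * g x) μ := by
  have h := L2.integrable_inner (𝕜 := ℂ) (hf.toLp f) (hg.toLp g)
  refine h.congr ?_
  filter_upwards [hf.coeFn_toLp, hg.coeFn_toLp] with x hx hy
  rw [RCLike.inner_apply, hx, hy, mul_comm]

lemma memL2.star {f : α → ℂ} (hf : MemLp f 2 μ) :
    MemLp (fun x => (starRingEnd ℂ) (f x)) 2 μ := by
  refine ⟨RCLike.continuous_conj.comp_aestronglyMeasurable hf.1, ?_⟩
  have : (fun x => (starRingEnd ℂ) (f x)) = (starRingEnd ℂ) ∘ f := rfl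
  rw [this]
  rw [show ((starRingEnd ℂ) ∘ f) = (starRingEnd ℂ) ∘ f from rfl]
  calc eLpNorm ((starRingEnd ℂ) ∘ f) 2 μ = eLpNorm f 2 μ := eLpNorm_conj f 2 μ
  _ < ⊤ := hf.2

lemma inner_toLp_eq {f g : α → ℂ} (hf : MemLp f 2 μ) (hg : MemLp g 2 μ) :
    (inner ℂ (hf.toLp f) (hg.toLp g) : ℂ) = ∫ x, (starRingEnd ℂ) (f x) * g x ∂μ := by
  rw [L2.inner_def]
  refine integral_congr_ae ?_
  filter_upwards [hf.coeFn_toLp, hg.coeFn_toLp] with x hx hy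
  rw [RCLike.inner_apply, hx, hy, mul_comm]

lemma memL2.integrable_norm_sq {f : α → ℂ} (hf : MemLp f 2 μ) :
    Integrable (fun x => ‖f x‖ ^ 2) μ := by
  have := hf.integrable_norm_rpow (by norm_num) (by norm_num)
  simpa [ENNReal.toReal_ofNat, Real.rpow_natCast] using this

lemma memLinf.ae_bound {w : α → ℝ} (hw : MemLp w ⊤ μ) :
    ∃ C : ℝ, 0 ≤ C ∧ ∀ᵐ x ∂μ, |w x| ≤ C := by
  refine ⟨(eLpNorm w ⊤ μ).toReal, ENNReal.toReal_nonneg, ?_⟩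
  have h := ae_le_eLpNormEssSup (f := w) (μ := μ)
  filter_upwards [h] with x hx
  have hle : (‖w x‖₊ : ℝ≥0∞) ≤ eLpNorm w ⊤ μ := by rwa [eLpNorm_exponent_top]
  have h2 := ENNReal.toReal_mono hw.2.ne hle
  simpa [Real.norm_eq_abs] using h2

variable {α : Type*} [MeasurableSpace α] {μ : Measure α}

/-- L² convergence of raw functions gives convergence of `toLp`. -/
lemma tendsto_toLp {a : ℕ → α → ℂ} {a0 : α → ℂ} (ha : ∀ n, MemLp (a n) 2 μ)
    (ha0 : MemLp a0 2 μ)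
    (h : Tendsto (fun n => ∫ x, ‖a n x - a0 x‖ ^ 2 ∂μ) atTop (nhds 0)) :
    Tendsto (fun n => (ha n).toLp (a n)) atTop (nhds (ha0.toLp a0)) := by
  rw [tendsto_iff_norm_sub_tendsto_zero]
  have key : ∀ n, ‖(ha n).toLp (a n) - ha0.toLp a0‖
      = (∫ x, ‖a n x - a0 x‖ ^ 2 ∂μ) ^ (1/2 : ℝ) := by
    intro n
    rw [← MemLp.toLp_sub (ha n) ha0, Lp.norm_toLp]
    rw [MemLp.eLpNorm_eq_integral_rpow_norm (by norm_num) (by norm_num) ((ha n).sub ha0)]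
    rw [ENNReal.toReal_ofReal (Real.rpow_nonneg (by positivity) _)]
    norm_num [Real.rpow_natCast]
  simp_rw [key]
  have := (h.rpow_const (p := (1/2:ℝ)) (Or.inr (by norm_num)))
  simpa using this

/-- multiplication by an (ae-bounded) L^∞ function preserves MemLp 2 -/
lemma memLinf.mul_memL2 {w : α → ℂ} {g : α → ℂ} (hw : MemLp w ⊤ μ) (hg : MemLp g 2 μ) :
    MemLp (fun x => w x * g x) 2 μ := by
  refine ⟨hw.1.mul hg.1, ?_⟩
  have h := eLpNorm_le_eLpNorm_top_mul_eLpNorm 2 w hg.1 (· * ·) 1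
      (Eventually.of_forall fun x => by rw [one_mul]; exact nnnorm_mul_le _ _)
  rw [ENNReal.coe_one, one_mul] at h
  exact lt_of_le_of_lt h (ENNReal.mul_lt_top hw.2 hg.2)

/-- L∞ multiplication is continuous at the `toLp` level. -/
lemma tendsto_toLp_mul {w : α → ℂ} (hw : MemLp w ⊤ μ)
    {a : ℕ → α → ℂ} {a0 : α → ℂ} (ha : ∀ n, MemLp (a n) 2 μ) (ha0 : MemLp a0 2 μ)
    (h : Tendsto (fun n => (ha n).toLp (a n)) atTop (nhds (ha0.toLp a0))) :
    Tendsto (fun n => (memLinf.mul_memL2 hw (ha n)).toLp (fun x => w x * a n x)) atTop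
      (nhds ((memLinf.mul_memL2 hw ha0).toLp (fun x => w x * a0 x))) := by
  rw [tendsto_iff_norm_sub_tendsto_zero] at h ⊢
  have key : ∀ n, ‖(memLinf.mul_memL2 hw (ha n)).toLp (fun x => w x * a n x)
        - (memLinf.mul_memL2 hw ha0).toLp (fun x => w x * a0 x)‖
      ≤ (eLpNorm w ⊤ μ).toReal * ‖(ha n).toLp (a n) - ha0.toLp a0‖ := by
    intro n
    rw [← MemLp.toLp_sub, ← MemLp.toLp_sub, Lp.norm_toLp, Lp.norm_toLp]
    have heq : (fun x => w x * a n x) - (fun x => w x * a0 x)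
        = fun x => w x * ((a n - a0) x) := by
      funext x; simp [mul_sub]
    rw [heq]
    have hb := eLpNorm_le_eLpNorm_top_mul_eLpNorm 2 w ((ha n).sub ha0).1 (· * ·) 1
      (Eventually.of_forall fun x => by rw [one_mul]; exact nnnorm_mul_le _ _)
    rw [ENNReal.coe_one, one_mul] at hb
    have hfin : eLpNorm w ⊤ μ * eLpNorm (a n - a0) 2 μ ≠ ⊤ :=
      (ENNReal.mul_lt_top hw.2 ((ha n).sub ha0).2).ne
    calc (eLpNorm (fun x => w x * (a n - a0) x) 2 μ).toReal
        ≤ (eLpNorm w ⊤ μ * eLpNorm (a n - a0) 2 μ).toReal := ENNReal.toReal_mono hfin hb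
      _ = (eLpNorm w ⊤ μ).toReal * (eLpNorm (a n - a0) 2 μ).toReal := ENNReal.toReal_mul
  have hub := Tendsto.const_mul ((eLpNorm w ⊤ μ).toReal) h
  rw [mul_zero] at hub
  exact squeeze_zero (fun n => norm_nonneg _) key hub

lemma tendsto_pairing {a b : ℕ → α → ℂ} {a0 b0 : α → ℂ}
    (ha : ∀ n, MemLp (a n) 2 μ) (ha0 : MemLp a0 2 μ)
    (hb : ∀ n, MemLp (b n) 2 μ) (hb0 : MemLp b0 2 μ)
    (hta : Tendsto (fun n => (ha n).toLp (a n)) atTop (nhds (ha0.toLp a0)))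
    (htb : Tendsto (fun n => (hb n).toLp (b n)) atTop (nhds (hb0.toLp b0))) :
    Tendsto (fun n => ∫ x, (starRingEnd ℂ) (a n x) * b n x ∂μ) atTop
      (nhds (∫ x, (starRingEnd ℂ) (a0 x) * b0 x ∂μ)) := by
  have h := hta.inner htb (𝕜 := ℂ)
  simp_rw [inner_toLp_eq] at h
  exact h

lemma memLinf_ofReal {w : α → ℝ} (hw : MemLp w ⊤ μ) :
    MemLp (fun x => ((w x : ℝ) : ℂ)) ⊤ μ := by
  refine ⟨Complex.continuous_ofReal.comp_aestronglyMeasurable hw.1, ?_⟩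
  have : eLpNorm (fun x => ((w x : ℝ) : ℂ)) ⊤ μ = eLpNorm w ⊤ μ :=
    eLpNorm_congr_norm_ae (Eventually.of_forall fun x => by simp)
  rw [this]; exact hw.2

/-- pointwise algebra for Step A -/
lemma ptwise_stepA {t : ℝ} (ht : 0 < t) (a uu : ℂ) :
    t⁻¹ * ‖(-a + (t : ℂ) * uu)‖ ^ 2
      = t⁻¹ * ‖a‖ ^ 2 + t * ‖uu‖ ^ 2 - 2 * ((starRingEnd ℂ) uu * a).re := by
  have hsq : ∀ z : ℂ, ‖z‖ ^ 2 = z.re ^ 2 + z.im ^ 2 := by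
    intro z
    rw [Complex.sq_norm, Complex.normSq_apply]
    ring
  simp only [hsq, Complex.add_re, Complex.add_im, Complex.neg_re, Complex.neg_im,
    Complex.mul_re, Complex.mul_im, Complex.ofReal_re, Complex.ofReal_im,
    Complex.conj_re, Complex.conj_im]
  field_simp
  ring

lemma integral_re' {h : α → ℂ} (hh : Integrable h μ) :
    ∫ x, (h x).re ∂μ = (∫ x, h x ∂μ).re :=
  integral_re hh

end Helpers

section MatrixHelpers

variable {d : ℕ}

variable {d : ℕ}

lemma matrix_coercive_det_ne_zero {M : Matrix (Fin d) (Fin d) ℝ} {α : ℝ} (hα : 0 < α)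
    (hco : ∀ v : Fin d → ℂ, α * ∑ j, ‖v j‖ ^ 2
      ≤ ∑ i, ∑ j, M i j * ((starRingEnd ℂ) (v i) * v j).re) :
    M.det ≠ 0 := by
  intro hdet
  obtain ⟨v, hv0, hMv⟩ := (Matrix.exists_mulVec_eq_zero_iff).2 hdet
  have h := hco (fun j => (v j : ℂ))
  have h1 : ∑ i, ∑ j, M i j * ((starRingEnd ℂ) ((v i : ℂ)) * (v j : ℂ)).re
      = ∑ i, v i * (M.mulVec v i) := by
    simp only [Matrix.mulVec, dotProduct, Finset.mul_sum]
    refine Finset.sum_congr rfl fun i _ => Finset.sum_congr rfl fun j _ => ?_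
    simp only [Complex.conj_ofReal, ← Complex.ofReal_mul, Complex.ofReal_re]
    ring
  rw [h1, hMv] at h
  simp only [Pi.zero_apply, mul_zero, Finset.sum_const_zero] at h
  obtain ⟨j, hj⟩ := Function.ne_iff.1 hv0
  have hvpos : 0 < ∑ j, ‖(v j : ℂ)‖ ^ 2 := by
    refine Finset.sum_pos' (fun k _ => by positivity) ⟨j, Finset.mem_univ j, ?_⟩
    simp only [Complex.norm_real, Real.norm_eq_abs]
    exact pow_pos (abs_pos.2 hj) 2
  nlinarith

lemma matrix_inv_quad {M : Matrix (Fin d) (Fin d) ℝ} (hsym : M.IsSymm) {α : ℝ} (hα : 0 < α)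
    (hco : ∀ v : Fin d → ℂ, α * ∑ j, ‖v j‖ ^ 2
      ≤ ∑ i, ∑ j, M i j * ((starRingEnd ℂ) (v i) * v j).re)
    (w : Fin d → ℂ) :
    ∑ i, ∑ j, (M⁻¹) i j * ((starRingEnd ℂ) (∑ k, (M i k : ℂ) * w k)
        * (∑ l, (M j l : ℂ) * w l)).re
      = ∑ i, ∑ j, M i j * ((starRingEnd ℂ) (w i) * w j).re := by
  have hdet : IsUnit M.det := isUnit_iff_ne_zero.2 (matrix_coercive_det_ne_zero hα hco)
  have hinv : M⁻¹ * M = 1 := Matrix.nonsing_inv_mul M hdet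
  set N : Matrix (Fin d) (Fin d) ℂ := M.map Complex.ofRealHom with hN
  set Ninv : Matrix (Fin d) (Fin d) ℂ := (M⁻¹).map Complex.ofRealHom with hNinv
  have hNN : Ninv * N = 1 := by
    rw [hN, hNinv, ← Matrix.map_mul, hinv, Matrix.map_one _ (map_zero _) (map_one _)]
  have hNsym : ∀ i j, N i j = N j i := by
    intro i j
    simp only [hN, Matrix.map_apply]
    exact congrArg _ (hsym.apply j i)
  set w' : Fin d → ℂ := N.mulVec w with hw'
  have hw'app : ∀ i, w' i = ∑ k, N i k * w k := fun i => rfl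
  have hconjw' : ∀ i, (starRingEnd ℂ) (w' i) = ∑ k, N i k * (starRingEnd ℂ) (w k) := by
    intro i
    rw [hw'app, map_sum]
    refine Finset.sum_congr rfl fun k _ => ?_
    rw [map_mul]
    congr 1
    simp [hN, Matrix.map_apply, Complex.conj_ofReal]
  -- the complex quadratic forms
  have key : ∑ i, ∑ j, Ninv i j * ((starRingEnd ℂ) (w' i) * w' j)
      = ∑ i, ∑ j, N i j * ((starRingEnd ℂ) (w i) * w j) := by
    have hwin : ∀ i, ∑ j, Ninv i j * w' j = ((Ninv * N).mulVec w) i := by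
      intro i
      rw [← Matrix.mulVec_mulVec]
      rfl
    calc ∑ i, ∑ j, Ninv i j * ((starRingEnd ℂ) (w' i) * w' j)
        = ∑ i, (starRingEnd ℂ) (w' i) * (∑ j, Ninv i j * w' j) := by
          refine Finset.sum_congr rfl fun i _ => ?_
          rw [Finset.mul_sum]
          exact Finset.sum_congr rfl fun j _ => by ring
      _ = ∑ i, (starRingEnd ℂ) (w' i) * w i := by
          refine Finset.sum_congr rfl fun i _ => ?_
          rw [hwin, hNN, Matrix.one_mulVec]
      _ = ∑ i, (∑ k, N i k * (starRingEnd ℂ) (w k)) * w i := by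
          simp_rw [hconjw']
      _ = ∑ k, (starRingEnd ℂ) (w k) * (∑ i, N k i * w i) := by
          simp_rw [Finset.sum_mul, Finset.mul_sum]
          rw [Finset.sum_comm]
          refine Finset.sum_congr rfl fun k _ => Finset.sum_congr rfl fun i _ => ?_
          rw [hNsym i k]; ring
      _ = ∑ i, ∑ j, N i j * ((starRingEnd ℂ) (w i) * w j) := by
          refine Finset.sum_congr rfl fun i _ => ?_
          rw [Finset.mul_sum]
          exact Finset.sum_congr rfl fun j _ => by ring
  -- take real parts
  have reL : ∑ i, ∑ j, (M⁻¹) i j * ((starRingEnd ℂ) (w' i) * w' j).re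
      = (∑ i, ∑ j, Ninv i j * ((starRingEnd ℂ) (w' i) * w' j)).re := by
    rw [Complex.re_sum]
    refine Finset.sum_congr rfl fun i _ => ?_
    rw [Complex.re_sum]
    refine Finset.sum_congr rfl fun j _ => ?_
    have : Ninv i j = ((M⁻¹ i j : ℝ) : ℂ) := rfl
    rw [this, Complex.re_ofReal_mul]
  have reR : ∑ i, ∑ j, M i j * ((starRingEnd ℂ) (w i) * w j).re
      = (∑ i, ∑ j, N i j * ((starRingEnd ℂ) (w i) * w j)).re := by
    rw [Complex.re_sum]
    refine Finset.sum_congr rfl fun i _ => ?_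
    rw [Complex.re_sum]
    refine Finset.sum_congr rfl fun j _ => ?_
    have : N i j = ((M i j : ℝ) : ℂ) := rfl
    rw [this, Complex.re_ofReal_mul]
  have hw'eq : ∀ i, w' i = ∑ k, (M i k : ℂ) * w k := fun i => rfl
  calc ∑ i, ∑ j, (M⁻¹) i j * ((starRingEnd ℂ) (∑ k, (M i k : ℂ) * w k)
        * (∑ l, (M j l : ℂ) * w l)).re
      = ∑ i, ∑ j, (M⁻¹) i j * ((starRingEnd ℂ) (w' i) * w' j).re := by
        refine Finset.sum_congr rfl fun i _ => Finset.sum_congr rfl fun j _ => ?_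
        rw [hw'eq i, hw'eq j]
    _ = (∑ i, ∑ j, Ninv i j * ((starRingEnd ℂ) (w' i) * w' j)).re := reL
    _ = (∑ i, ∑ j, N i j * ((starRingEnd ℂ) (w i) * w j)).re := by rw [key]
    _ = ∑ i, ∑ j, M i j * ((starRingEnd ℂ) (w i) * w j).re := reR.symm

end MatrixHelpers

namespace RCD

variable {d : ℕ}

variable {Ω : Set (E d)} {φ ψ : E d → ℂ}

lemma IsTest.memL2 (hφ : IsTest Ω φ) : MemLp φ 2 (volume.restrict Ω) :=
  (hφ.1.continuous.memLp_of_hasCompactSupport (μ := volume) hφ.2.1).restrict Ω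

lemma IsTest.grad_continuous (hφ : IsTest Ω φ) (j : Fin d) :
    Continuous (fun x => grad φ x j) :=
  ((hφ.1.continuous_fderiv (by simp)).clm_apply continuous_const)

lemma IsTest.grad_hcs (hφ : IsTest Ω φ) (j : Fin d) :
    HasCompactSupport (fun x => grad φ x j) :=
  (hφ.2.1.fderiv ℝ).comp_left (g := fun L : E d →L[ℝ] ℂ => L (EuclideanSpace.single j 1)) rfl

lemma IsTest.grad_memL2 (hφ : IsTest Ω φ) (j : Fin d) :
    MemLp (fun x => grad φ x j) 2 (volume.restrict Ω) :=
  ((hφ.grad_continuous j).memLp_of_hasCompactSupport (μ := volume) (hφ.grad_hcs j)).restrict Ω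

lemma IsTest.conj (hφ : IsTest Ω φ) : IsTest Ω (fun x => (starRingEnd ℂ) (φ x)) := by
  have hsupp : Function.support (fun x => (starRingEnd ℂ) (φ x)) = Function.support φ := by
    ext x; simp [Function.support]
  have hts : tsupport (fun x => (starRingEnd ℂ) (φ x)) = tsupport φ := by
    unfold tsupport; rw [hsupp]
  refine ⟨?_, ?_, ?_⟩
  · exact (Complex.conjCLE : ℂ ≃L[ℝ] ℂ).toContinuousLinearMap.contDiff.comp hφ.1
  · unfold HasCompactSupport; rw [hts]; exact hφ.2.1
  · rw [hts]; exact hφ.2.2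

lemma grad_conj (hφ : IsTest Ω φ) (x : E d) (j : Fin d) :
    grad (fun x => (starRingEnd ℂ) (φ x)) x j = (starRingEnd ℂ) (grad φ x j) := by
  have hd : DifferentiableAt ℝ φ x := (hφ.1.differentiable (by simp)).differentiableAt
  have : (fun x => (starRingEnd ℂ) (φ x)) = (Complex.conjCLE : ℂ ≃L[ℝ] ℂ) ∘ φ := rfl
  unfold grad
  rw [this, fderiv_comp x (Complex.conjCLE : ℂ ≃L[ℝ] ℂ).differentiableAt hd,
    ContinuousLinearEquiv.fderiv]
  simp

lemma IsTest.mul (hφ : IsTest Ω φ) (hψ : IsTest Ω ψ) : IsTest Ω (fun x => φ x * ψ x) := by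
  refine ⟨hφ.1.mul hψ.1, ?_, ?_⟩
  · exact hφ.2.1.mul_right
  · exact (closure_mono (Function.support_mul_subset_left φ ψ)).trans hφ.2.2

lemma grad_mul (hφ : IsTest Ω φ) (hψ : IsTest Ω ψ) (x : E d) (j : Fin d) :
    grad (fun x => φ x * ψ x) x j = grad φ x j * ψ x + φ x * grad ψ x j := by
  have hdφ : DifferentiableAt ℝ φ x := (hφ.1.differentiable (by simp)).differentiableAt
  have hdψ : DifferentiableAt ℝ ψ x := (hψ.1.differentiable (by simp)).differentiableAt
  unfold grad
  rw [fderiv_fun_mul hdφ hdψ]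
  simp [smul_eq_mul]
  ring

end RCD



open RCD
/-- Remark 2.1(ii): if `c ≥ 0` and `c - div b ≥ λ > 0`, and `(u,q) ∈ H¹₀ × H(div)`
solves `q = A∇u - b u`, `-div q + (c - div b) u = f`, then
`‖f‖²_{(c-div b)⁻¹} = ‖u‖²_c + ‖∇u‖²_A + ‖q + b u‖²_{A⁻¹} + ‖div q‖²_{(c-div b)⁻¹}`. -/
theorem statement6 (d : ℕ) (Ω : Set (E d)) (μ : Measure (E d))
    (hμ : μ = volume.restrict Ω)
    (A : E d → Matrix (Fin d) (Fin d) ℝ) (α : ℝ) (hA : IsDiffusion μ A α)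
    (b : E d → Fin d → ℝ) (db : E d → ℝ)
    (hb : MemLinfV μ b) (hdb : MemLp db ⊤ μ) (hdiv : IsDiv Ω μ b db)
    (c : E d → ℝ) (hcL : MemLp c ⊤ μ)
    (lam : ℝ) (hlam : 0 < lam) (hc : ∀ᵐ x ∂μ, 0 ≤ c x)
    (hcb : ∀ᵐ x ∂μ, lam ≤ c x - db x)
    (f : E d → ℂ) (hf : MemLp f 2 μ)
    (u : E d → ℂ) (gu : E d → Fin d → ℂ) (hu : MemH10 Ω μ u gu)
    (q : E d → Fin d → ℂ) (dq : E d → ℂ) (hq : MemHdiv Ω μ q dq)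
    (hqA : ∀ᵐ x ∂μ, ∀ i, q x i = mul (A x) (gu x) i - (b x i : ℂ) * u x)
    (heq : ∀ᵐ x ∂μ, -dq x + ((c x : ℂ) - (db x : ℂ)) * u x = f x) :
    nsq μ (fun x => (c x - db x)⁻¹) f
      = nsq μ c u + nsqM μ A gu
        + nsqM μ (fun x => (A x)⁻¹) (fun x i => q x i + (b x i : ℂ) * u x)
        + nsq μ (fun x => (c x - db x)⁻¹) dq := by

  subst hμ
  obtain ⟨hu2, hgu2, φ, hφT, hφconv⟩ := hu
  obtain ⟨hq2, hdq2, hqvar⟩ := hq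
  have hφ2 : ∀ n, MemLp (φ n) 2 (volume.restrict Ω) := fun n => (hφT n).memL2
  have hg2 : ∀ n j, MemLp (fun x => grad (φ n) x j) 2 (volume.restrict Ω) :=
    fun n j => (hφT n).grad_memL2 j
  have hbC : ∀ j, MemLp (fun x => ((b x j : ℝ) : ℂ)) ⊤ (volume.restrict Ω) :=
    fun j => memLinf_ofReal (hb j)
  have hdbC : MemLp (fun x => ((db x : ℝ) : ℂ)) ⊤ (volume.restrict Ω) := memLinf_ofReal hdb
  have hAC : ∀ i j, MemLp (fun x => ((A x i j : ℝ) : ℂ)) ⊤ (volume.restrict Ω) :=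
    fun i j => memLinf_ofReal (hA.2.1 i j)
  -- convergence of the approximating sequence
  have hconvφ : Tendsto (fun n => ∫ x, ‖φ n x - u x‖ ^ 2 ∂(volume.restrict Ω)) atTop (nhds 0) := by
    have hnn2 : ∀ n, 0 ≤ nsqV (volume.restrict Ω) (fun _ => 1)
        (fun x j => grad (φ n) x j - gu x j) :=
      fun n => integral_nonneg fun x => by positivity
    have hle : ∀ n, nsq (volume.restrict Ω) (fun _ => 1) (fun x => φ n x - u x)
        ≤ nsq (volume.restrict Ω) (fun _ => 1) (fun x => φ n x - u x)
          + nsqV (volume.restrict Ω) (fun _ => 1) (fun x j => grad (φ n) x j - gu x j) :=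
      fun n => le_add_of_nonneg_right (hnn2 n)
    have h0 : Tendsto (fun n => nsq (volume.restrict Ω) (fun _ => 1) (fun x => φ n x - u x))
        atTop (nhds 0) :=
      squeeze_zero (fun n => integral_nonneg fun x => by positivity) hle hφconv
    simpa [nsq] using h0
  have hconvg : ∀ j, Tendsto (fun n => ∫ x, ‖grad (φ n) x j - gu x j‖ ^ 2 ∂(volume.restrict Ω))
      atTop (nhds 0) := by
    intro j
    have hDint : ∀ n k, Integrable (fun x => ‖grad (φ n) x k - gu x k‖ ^ 2)
        (volume.restrict Ω) :=
      fun n k => memL2.integrable_norm_sq ((hg2 n k).sub (hgu2 k))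
    have hle : ∀ n, ∫ x, ‖grad (φ n) x j - gu x j‖ ^ 2 ∂(volume.restrict Ω)
        ≤ nsq (volume.restrict Ω) (fun _ => 1) (fun x => φ n x - u x)
          + nsqV (volume.restrict Ω) (fun _ => 1) (fun x j => grad (φ n) x j - gu x j) := by
      intro n
      have h1 : ∫ x, ‖grad (φ n) x j - gu x j‖ ^ 2 ∂(volume.restrict Ω)
          ≤ nsqV (volume.restrict Ω) (fun _ => 1) (fun x j => grad (φ n) x j - gu x j) := by
        unfold nsqV
        simp only [one_mul]
        refine integral_mono (hDint n j) (integrable_finset_sum _ fun k _ => hDint n k) ?_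
        intro x
        exact Finset.single_le_sum (f := fun k => ‖grad (φ n) x k - gu x k‖ ^ 2)
          (fun k _ => by positivity) (Finset.mem_univ j)
      have h2 : 0 ≤ nsq (volume.restrict Ω) (fun _ => 1) (fun x => φ n x - u x) :=
        integral_nonneg fun x => by positivity
      linarith
    exact squeeze_zero (fun n => integral_nonneg fun x => by positivity) hle hφconv
  have tφ := tendsto_toLp hφ2 hu2 hconvφ
  have tg : ∀ j, Tendsto (fun n => (hg2 n j).toLp (fun x => grad (φ n) x j)) atTop
      (nhds ((hgu2 j).toLp (fun x => gu x j))) :=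
    fun j => tendsto_toLp (fun n => hg2 n j) (hgu2 j) (hconvg j)
  -- abbreviations for the complex integrals
  set I : ℂ := ∫ x, (starRingEnd ℂ) (u x) * dq x ∂(volume.restrict Ω) with hI
  set P : ℂ := ∑ j, ∫ x, (starRingEnd ℂ) (gu x j) * mul (A x) (gu x) j ∂(volume.restrict Ω) with hP
  set Y : ℂ := ∑ j, ∫ x, (starRingEnd ℂ) (gu x j) * (((b x j : ℝ) : ℂ) * u x) ∂(volume.restrict Ω)
    with hY
  set Z : ℂ := ∑ j, ∫ x, (starRingEnd ℂ) (u x) * (((b x j : ℝ) : ℂ) * gu x j) ∂(volume.restrict Ω)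
    with hZ
  set W : ℂ := ∫ x, (starRingEnd ℂ) (u x) * (((db x : ℝ) : ℂ) * u x) ∂(volume.restrict Ω) with hW
  have hmulA2 : ∀ j, MemLp (fun x => mul (A x) (gu x) j) 2 (volume.restrict Ω) := by
    intro j
    have h := memLp_finset_sum (μ := volume.restrict Ω) (p := 2) Finset.univ
      (f := fun k => fun x => ((A x j k : ℝ) : ℂ) * gu x k)
      (fun k _ => memLinf.mul_memL2 (hAC j k) (hgu2 k))
    have : (fun x => mul (A x) (gu x) j)
        = fun a => ∑ k, (fun k => fun x => ((A x j k : ℝ) : ℂ) * gu x k) k a := by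
      funext a; rfl
    rw [this]
    exact h

  -- (C1) limit of the H(div) variational identity
  have hC1 : P - Y = -I := by
    have hint1 : ∀ n j, Integrable (fun x => (starRingEnd ℂ) (grad (φ n) x j) * q x j)
        (volume.restrict Ω) := fun n j => memL2.integrable_conj_mul (hg2 n j) (hq2 j)
    have hC1n : ∀ n, (∑ j, ∫ x, (starRingEnd ℂ) (grad (φ n) x j) * q x j ∂(volume.restrict Ω))
        = - ∫ x, (starRingEnd ℂ) (φ n x) * dq x ∂(volume.restrict Ω) := by
      intro n
      have h := hqvar (fun x => (starRingEnd ℂ) (φ n x)) (hφT n).conj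
      have e1 : ∫ x, ∑ j, grad (fun y => (starRingEnd ℂ) (φ n y)) x j * q x j
            ∂(volume.restrict Ω)
          = ∑ j, ∫ x, (starRingEnd ℂ) (grad (φ n) x j) * q x j ∂(volume.restrict Ω) := by
        rw [← integral_finset_sum _ (fun j _ => hint1 n j)]
        refine integral_congr_ae (Eventually.of_forall fun x => ?_)
        refine Finset.sum_congr rfl fun j _ => ?_
        rw [grad_conj (hφT n)]
      rw [e1] at h
      exact h
    have tL : Tendsto (fun n => ∑ j, ∫ x, (starRingEnd ℂ) (grad (φ n) x j) * q x j
          ∂(volume.restrict Ω)) atTop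
        (nhds (∑ j, ∫ x, (starRingEnd ℂ) (gu x j) * q x j ∂(volume.restrict Ω))) :=
      tendsto_finset_sum _ fun j _ =>
        tendsto_pairing (fun n => hg2 n j) (hgu2 j) (fun _ => hq2 j) (hq2 j) (tg j)
          tendsto_const_nhds
    have tR : Tendsto (fun n => - ∫ x, (starRingEnd ℂ) (φ n x) * dq x ∂(volume.restrict Ω))
        atTop (nhds (-I)) :=
      (tendsto_pairing hφ2 hu2 (fun _ => hdq2) hdq2 tφ tendsto_const_nhds).neg
    have huniq : (∑ j, ∫ x, (starRingEnd ℂ) (gu x j) * q x j ∂(volume.restrict Ω)) = -I :=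
      tendsto_nhds_unique tL (Filter.Tendsto.congr (fun n => (hC1n n).symm) tR)
    have hsplit : ∀ j, ∫ x, (starRingEnd ℂ) (gu x j) * q x j ∂(volume.restrict Ω)
        = (∫ x, (starRingEnd ℂ) (gu x j) * mul (A x) (gu x) j ∂(volume.restrict Ω))
          - ∫ x, (starRingEnd ℂ) (gu x j) * (((b x j : ℝ) : ℂ) * u x) ∂(volume.restrict Ω) := by
      intro j
      rw [← integral_sub (memL2.integrable_conj_mul (hgu2 j) (hmulA2 j))
        (memL2.integrable_conj_mul (hgu2 j) (memLinf.mul_memL2 (hbC j) hu2))]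
      refine integral_congr_ae ?_
      filter_upwards [hqA] with x hx
      rw [hx j]
      ring
    rw [hP, hY, ← Finset.sum_sub_distrib, ← huniq]
    exact Finset.sum_congr rfl fun j _ => (hsplit j).symm
  -- (C2) limit of the divergence identity for b
  have hC2 : Z + Y = -W := by
    have hint1 : ∀ n j, Integrable
        (fun x => (starRingEnd ℂ) (φ n x) * (((b x j : ℝ) : ℂ) * grad (φ n) x j))
        (volume.restrict Ω) :=
      fun n j => memL2.integrable_conj_mul (hφ2 n) (memLinf.mul_memL2 (hbC j) (hg2 n j))
    have hint2 : ∀ n j, Integrable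
        (fun x => (starRingEnd ℂ) (grad (φ n) x j) * (((b x j : ℝ) : ℂ) * φ n x))
        (volume.restrict Ω) :=
      fun n j => memL2.integrable_conj_mul (hg2 n j) (memLinf.mul_memL2 (hbC j) (hφ2 n))
    have hC2n : ∀ n,
        ((∑ j, ∫ x, (starRingEnd ℂ) (φ n x) * (((b x j : ℝ) : ℂ) * grad (φ n) x j)
            ∂(volume.restrict Ω))
          + ∑ j, ∫ x, (starRingEnd ℂ) (grad (φ n) x j) * (((b x j : ℝ) : ℂ) * φ n x)
            ∂(volume.restrict Ω))
        = - ∫ x, (starRingEnd ℂ) (φ n x) * (((db x : ℝ) : ℂ) * φ n x) ∂(volume.restrict Ω) := by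
      intro n
      have h := hdiv (fun x => φ n x * (starRingEnd ℂ) (φ n x)) ((hφT n).mul (hφT n).conj)
      have e1 : ∫ x, ∑ j, grad (fun y => φ n y * (starRingEnd ℂ) (φ n y)) x j * (b x j : ℂ)
            ∂(volume.restrict Ω)
          = (∑ j, ∫ x, (starRingEnd ℂ) (φ n x) * (((b x j : ℝ) : ℂ) * grad (φ n) x j)
              ∂(volume.restrict Ω))
            + ∑ j, ∫ x, (starRingEnd ℂ) (grad (φ n) x j) * (((b x j : ℝ) : ℂ) * φ n x)
              ∂(volume.restrict Ω) := by
        calc ∫ x, ∑ j, grad (fun y => φ n y * (starRingEnd ℂ) (φ n y)) x j * (b x j : ℂ)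
              ∂(volume.restrict Ω)
            = ∫ x, ((∑ j, (starRingEnd ℂ) (φ n x) * (((b x j : ℝ) : ℂ) * grad (φ n) x j))
                + ∑ j, (starRingEnd ℂ) (grad (φ n) x j) * (((b x j : ℝ) : ℂ) * φ n x))
              ∂(volume.restrict Ω) := by
              refine integral_congr_ae (Eventually.of_forall fun x => ?_)
              refine Eq.trans (Finset.sum_congr rfl fun j _ => ?_) Finset.sum_add_distrib
              rw [grad_mul (hφT n) (hφT n).conj, grad_conj (hφT n)]
              ring
          _ = (∫ x, ∑ j, (starRingEnd ℂ) (φ n x) * (((b x j : ℝ) : ℂ) * grad (φ n) x j)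
                ∂(volume.restrict Ω))
              + ∫ x, ∑ j, (starRingEnd ℂ) (grad (φ n) x j) * (((b x j : ℝ) : ℂ) * φ n x)
                ∂(volume.restrict Ω) :=
              integral_add (integrable_finset_sum _ (fun j _ => hint1 n j))
                (integrable_finset_sum _ (fun j _ => hint2 n j))
          _ = _ := by
              rw [integral_finset_sum _ (fun j _ => hint1 n j),
                integral_finset_sum _ (fun j _ => hint2 n j)]
      have e2 : ∫ x, (φ n x * (starRingEnd ℂ) (φ n x)) * (db x : ℂ) ∂(volume.restrict Ω)
          = ∫ x, (starRingEnd ℂ) (φ n x) * (((db x : ℝ) : ℂ) * φ n x) ∂(volume.restrict Ω) := by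
        refine integral_congr_ae (Eventually.of_forall fun x => ?_)
        ring
      rw [e1, e2] at h
      exact h
    have tL1 : Tendsto (fun n => ∑ j, ∫ x, (starRingEnd ℂ) (φ n x)
          * (((b x j : ℝ) : ℂ) * grad (φ n) x j) ∂(volume.restrict Ω)) atTop (nhds Z) := by
      rw [hZ]
      exact tendsto_finset_sum _ fun j _ =>
        tendsto_pairing hφ2 hu2 (fun n => memLinf.mul_memL2 (hbC j) (hg2 n j))
          (memLinf.mul_memL2 (hbC j) (hgu2 j)) tφ
          (tendsto_toLp_mul (hbC j) (fun n => hg2 n j) (hgu2 j) (tg j))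
    have tL2 : Tendsto (fun n => ∑ j, ∫ x, (starRingEnd ℂ) (grad (φ n) x j)
          * (((b x j : ℝ) : ℂ) * φ n x) ∂(volume.restrict Ω)) atTop (nhds Y) := by
      rw [hY]
      exact tendsto_finset_sum _ fun j _ =>
        tendsto_pairing (fun n => hg2 n j) (hgu2 j)
          (fun n => memLinf.mul_memL2 (hbC j) (hφ2 n)) (memLinf.mul_memL2 (hbC j) hu2)
          (tg j) (tendsto_toLp_mul (hbC j) hφ2 hu2 tφ)
    have tR : Tendsto (fun n => - ∫ x, (starRingEnd ℂ) (φ n x) * (((db x : ℝ) : ℂ) * φ n x)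
          ∂(volume.restrict Ω)) atTop (nhds (-W)) := by
      rw [hW]
      exact (tendsto_pairing hφ2 hu2 (fun n => memLinf.mul_memL2 hdbC (hφ2 n))
        (memLinf.mul_memL2 hdbC hu2) tφ (tendsto_toLp_mul hdbC hφ2 hu2 tφ)).neg
    exact tendsto_nhds_unique (tL1.add tL2) (Filter.Tendsto.congr (fun n => (hC2n n).symm) tR)
  have hR7 : Z.re = Y.re := by
    have h : Y = (starRingEnd ℂ) Z := by
      rw [hY, hZ, map_sum]
      refine Finset.sum_congr rfl fun j _ => ?_
      rw [← integral_conj]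
      refine integral_congr_ae (Eventually.of_forall fun x => ?_)
      simp only [map_mul, Complex.conj_conj, Complex.conj_ofReal]
      ring
    rw [h, Complex.conj_re]
  have hintP : ∀ j, Integrable (fun x => (starRingEnd ℂ) (gu x j) * mul (A x) (gu x) j)
      (volume.restrict Ω) := fun j => memL2.integrable_conj_mul (hgu2 j) (hmulA2 j)
  have hR3 : nsqM (volume.restrict Ω) A gu = P.re := by
    rw [hP, Complex.re_sum]
    have hj : ∀ j, (∫ x, (starRingEnd ℂ) (gu x j) * mul (A x) (gu x) j
          ∂(volume.restrict Ω)).re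
        = ∫ x, ((starRingEnd ℂ) (gu x j) * mul (A x) (gu x) j).re ∂(volume.restrict Ω) :=
      fun j => (integral_re' (hintP j)).symm
    simp_rw [hj]
    have hintPre : ∀ j, Integrable
        (fun x => ((starRingEnd ℂ) (gu x j) * mul (A x) (gu x) j).re) (volume.restrict Ω) :=
      fun j => (hintP j).re
    rw [← integral_finset_sum _ (fun j _ => hintPre j)]
    unfold nsqM
    refine integral_congr_ae (Eventually.of_forall fun x => ?_)
    refine Finset.sum_congr rfl fun i _ => ?_
    rw [show mul (A x) (gu x) i = ∑ j, ((A x i j : ℝ) : ℂ) * gu x j from rfl,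
      Finset.mul_sum, Complex.re_sum]
    refine Finset.sum_congr rfl fun j _ => ?_
    rw [show (starRingEnd ℂ) (gu x i) * (((A x i j : ℝ) : ℂ) * gu x j)
      = ((A x i j : ℝ) : ℂ) * ((starRingEnd ℂ) (gu x i) * gu x j) from by ring,
      Complex.re_ofReal_mul]
  have hR4 : nsqM (volume.restrict Ω) (fun x => (A x)⁻¹) (fun x i => q x i + (b x i : ℂ) * u x)
      = nsqM (volume.restrict Ω) A gu := by
    unfold nsqM
    refine integral_congr_ae ?_
    filter_upwards [hqA] with x hx
    have hx' : ∀ i, q x i + ((b x i : ℝ) : ℂ) * u x = mul (A x) (gu x) i := by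
      intro i; rw [hx i]; ring
    have hkey := matrix_inv_quad (hA.1 x) hA.2.2.1 (hA.2.2.2 x) (gu x)
    refine Eq.trans ?_ hkey
    refine Finset.sum_congr rfl fun i _ => Finset.sum_congr rfl fun j _ => ?_
    rw [show (∑ k, ((A x i k : ℝ) : ℂ) * gu x k) = mul (A x) (gu x) i from rfl,
      show (∑ l, ((A x j l : ℝ) : ℂ) * gu x l) = mul (A x) (gu x) j from rfl,
      ← hx' i, ← hx' j]
  have hWre : W.re = ∫ x, db x * ‖u x‖ ^ 2 ∂(volume.restrict Ω) := by
    rw [hW, ← integral_re' (memL2.integrable_conj_mul hu2 (memLinf.mul_memL2 hdbC hu2))]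
    refine integral_congr_ae (Eventually.of_forall fun x => ?_)
    show ((starRingEnd ℂ) (u x) * (((db x : ℝ) : ℂ) * u x)).re = db x * ‖u x‖ ^ 2
    rw [show (starRingEnd ℂ) (u x) * (((db x : ℝ) : ℂ) * u x)
      = ((db x : ℝ) : ℂ) * ((starRingEnd ℂ) (u x) * u x) from by ring]
    rw [RCLike.conj_mul]
    simp [Complex.re_ofReal_mul, ← Complex.ofReal_pow]
  obtain ⟨Cc, hCc0, hCc⟩ := memLinf.ae_bound hcL
  obtain ⟨Cd, hCd0, hCd⟩ := memLinf.ae_bound hdb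
  have hintc : Integrable (fun x => c x * ‖u x‖ ^ 2) (volume.restrict Ω) := by
    refine Integrable.bdd_mul (c := Cc) (memL2.integrable_norm_sq hu2) hcL.1 ?_
    filter_upwards [hCc] with x h1
    rwa [Real.norm_eq_abs]
  have hintdb : Integrable (fun x => db x * ‖u x‖ ^ 2) (volume.restrict Ω) := by
    refine Integrable.bdd_mul (c := Cd) (memL2.integrable_norm_sq hu2) hdb.1 ?_
    filter_upwards [hCd] with x h1
    rwa [Real.norm_eq_abs]
  have hR1 : nsq (volume.restrict Ω) (fun x => (c x - db x)⁻¹) f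
      = nsq (volume.restrict Ω) (fun x => (c x - db x)⁻¹) dq
        + nsq (volume.restrict Ω) (fun x => c x - db x) u - 2 * I.re := by
    have hint1 : Integrable (fun x => (c x - db x)⁻¹ * ‖dq x‖ ^ 2) (volume.restrict Ω) := by
      refine Integrable.bdd_mul (c := lam⁻¹) (memL2.integrable_norm_sq hdq2)
        ((hcL.1.aemeasurable.sub hdb.1.aemeasurable).inv.aestronglyMeasurable) ?_
      filter_upwards [hcb] with x hx
      have h2 : 0 < c x - db x := lt_of_lt_of_le hlam hx
      rw [Real.norm_eq_abs, abs_inv, abs_of_pos h2]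
      exact inv_anti₀ hlam hx
    have hint2 : Integrable (fun x => (c x - db x) * ‖u x‖ ^ 2) (volume.restrict Ω) := by
      have : (fun x => (c x - db x) * ‖u x‖ ^ 2)
          = fun x => c x * ‖u x‖ ^ 2 - db x * ‖u x‖ ^ 2 := by
        funext x; ring
      rw [this]
      exact hintc.sub hintdb
    have hint3 : Integrable (fun x => ((starRingEnd ℂ) (u x) * dq x).re)
        (volume.restrict Ω) := (memL2.integrable_conj_mul hu2 hdq2).re
    have hae : (fun x => (c x - db x)⁻¹ * ‖f x‖ ^ 2) =ᵐ[volume.restrict Ω]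
        fun x => ((c x - db x)⁻¹ * ‖dq x‖ ^ 2 + (c x - db x) * ‖u x‖ ^ 2)
          - 2 * ((starRingEnd ℂ) (u x) * dq x).re := by
      filter_upwards [hcb, heq] with x h1 h2
      have ht : 0 < c x - db x := lt_of_lt_of_le hlam h1
      have hf' : f x = -dq x + ((c x - db x : ℝ) : ℂ) * u x := by
        rw [← h2]; push_cast; ring
      have hkey := ptwise_stepA ht (dq x) (u x)
      rw [hf', hkey]
    have hint12 : Integrable (fun x => (c x - db x)⁻¹ * ‖dq x‖ ^ 2
        + (c x - db x) * ‖u x‖ ^ 2) (volume.restrict Ω) := hint1.add hint2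
    have hint3' : Integrable (fun x => 2 * ((starRingEnd ℂ) (u x) * dq x).re)
        (volume.restrict Ω) := hint3.const_mul 2
    unfold nsq
    rw [integral_congr_ae hae, integral_sub hint12 hint3',
      integral_add hint1 hint2, integral_const_mul,
      integral_re' (memL2.integrable_conj_mul hu2 hdq2)]
  have hR2 : nsq (volume.restrict Ω) (fun x => c x - db x) u
      = nsq (volume.restrict Ω) c u - ∫ x, db x * ‖u x‖ ^ 2 ∂(volume.restrict Ω) := by
    unfold nsq
    rw [← integral_sub hintc hintdb]
    refine integral_congr_ae (Eventually.of_forall fun x => ?_)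
    ring
  have hC1re : P.re - Y.re = -I.re := by
    rw [← Complex.sub_re, hC1, Complex.neg_re]
  have hC2re : Z.re + Y.re = -W.re := by
    rw [← Complex.add_re, hC2, Complex.neg_re]
  rw [hR4, hR3, hR1, hR2]
  linarith [hC1re, hC2re, hR7, hWre]
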